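/- Let W be a conference matrix of order n ≥ 2 such that n−1 is not a perfect square, and let k be an odd positive integer with k² ≤ n−1 < (k+2)². Then E(W) ≤ n(k² + 2k + n − 1)/(2(k+1)) (an inequality of rational numbers), with equality if and only if every entry of W·1_n lies in {k, k+2}. -/

import Mathlib

/-!
The row sums `rᵢ` of a conference matrix are odd: two distinct rows are orthogonal, and their
entrywise product is `±1` in `n - 2` places, so `n` is even and each row, having `n - 1` entries
`±1`, has odd sum. Since `W Wᵀ = (n - 1) I` forces `Wᵀ W = (n - 1) I`, also
`∑ rᵢ² = ‖W 1‖² = n (n - 1)`. For odd `r` and odd `k` parity rules out `r = k + 1`, so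
`(r - k)(r - k - 2) ≥ 0`; summing over the rows gives
`2 (k + 1) E(W) = n (k² + 2k + n - 1) - ∑ (rᵢ - k)(rᵢ - k - 2)`, which is the bound, with
equality exactly when every `rᵢ ∈ {k, k + 2}`.
-/

open Finset

theorem Int.sub_mul_sub_add_two_nonneg {k r : ℤ} (hk : Odd k) (hr : Odd r) :
    0 ≤ (r - k) * (r - (k + 2)) := by
  obtain ⟨a, rfl⟩ := hk
  obtain ⟨b, rfl⟩ := hr
  rcases le_or_gt b a with h | h <;> nlinarith

theorem Finset.sum_sub_mul_sub {ι R : Type*} [CommRing R] (s : Finset ι) (r : ι → R) (a b : R) :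
    ∑ i ∈ s, (r i - a) * (r i - b) = ∑ i ∈ s, r i ^ 2 - (a + b) * ∑ i ∈ s, r i + #s * (a * b) := by
  have h (i : ι) : (r i - a) * (r i - b) = r i ^ 2 - (a + b) * r i + a * b := by ring
  simp only [h, sum_add_distrib, sum_sub_distrib, ← mul_sum, sum_const, nsmul_eq_mul]
  ring

namespace Matrix

variable {ι : Type*} [DecidableEq ι] {W : Matrix ι ι ℤ}

theorem intCast_apply_zmod_two (hdiag : ∀ i, W i i = 0)
    (hoff : ∀ i j, i ≠ j → W i j = 1 ∨ W i j = -1) (i j : ι) :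
    (W i j : ZMod 2) = 1 - if i = j then 1 else 0 := by
  split_ifs with h
  · simp [h, hdiag]
  · rcases hoff i j h with h' | h' <;> simp [h']

variable [Fintype ι]

theorem intCast_sum_apply_zmod_two (hdiag : ∀ i, W i i = 0)
    (hoff : ∀ i j, i ≠ j → W i j = 1 ∨ W i j = -1) (i : ι) :
    ((∑ j, W i j : ℤ) : ZMod 2) = Fintype.card ι - 1 := by
  simp [intCast_apply_zmod_two hdiag hoff i, sum_sub_distrib]

theorem even_card_of_mul_transpose_eq_smul_one (hdiag : ∀ i, W i i = 0)
    (hoff : ∀ i j, i ≠ j → W i j = 1 ∨ W i j = -1) {c : ℤ} (hcard : 1 < Fintype.card ι)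
    (horth : W * Wᵀ = c • 1) : Even (Fintype.card ι) := by
  obtain ⟨i, i', hii'⟩ := Fintype.exists_pair_of_one_lt_card hcard
  have h0 : ∑ m, W i m * W i' m = 0 := by
    simpa [mul_apply, hii'] using congrFun (congrFun horth i) i'
  have hterm (m : ι) : ((W i m * W i' m : ℤ) : ZMod 2)
      = 1 - (if i = m then 1 else 0) - (if i' = m then 1 else 0) := by
    push_cast
    rw [intCast_apply_zmod_two hdiag hoff, intCast_apply_zmod_two hdiag hoff]
    split_ifs <;> simp_all
  have hcast : (Fintype.card ι : ZMod 2) - 1 - 1 = 0 := by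
    simpa only [Int.cast_sum, hterm, sum_sub_distrib, sum_const, card_univ, nsmul_eq_mul,
      mul_one, sum_ite_eq, mem_univ, ↓reduceIte, Int.cast_zero]
      using congrArg (fun x : ℤ => (x : ZMod 2)) h0
  rw [← ZMod.natCast_eq_zero_iff_even]
  linear_combination hcast + (by decide : (2 : ZMod 2) = 0)

theorem odd_sum_apply_of_mul_transpose_eq_smul_one (hdiag : ∀ i, W i i = 0)
    (hoff : ∀ i j, i ≠ j → W i j = 1 ∨ W i j = -1) {c : ℤ} (hcard : 1 < Fintype.card ι)
    (horth : W * Wᵀ = c • 1) (i : ι) : Odd (∑ j, W i j) := by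
  rw [← ZMod.intCast_eq_one_iff_odd, intCast_sum_apply_zmod_two hdiag hoff,
    ZMod.natCast_eq_zero_iff_even.mpr
      (even_card_of_mul_transpose_eq_smul_one hdiag hoff hcard horth)]
  decide

theorem sum_sq_sum_apply_eq_of_transpose_mul_eq_smul_one {R : Type*} [CommSemiring R]
    {A : Matrix ι ι R} {c : R} (h : Aᵀ * A = c • 1) :
    ∑ i, (∑ j, A i j) ^ 2 = Fintype.card ι * c := by
  calc ∑ i, (∑ j, A i j) ^ 2 = (A *ᵥ 1) ⬝ᵥ (A *ᵥ 1) := by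
        simp [dotProduct, mulVec, sq]
    _ = 1 ⬝ᵥ (1 ᵥ* (Aᵀ * A)) := by
        rw [dotProduct_mulVec, ← vecMul_transpose, vecMul_vecMul, dotProduct_comm]
    _ = Fintype.card ι * c := by
        simp [h, dotProduct, vecMul_smul]

theorem transpose_mul_eq_smul_one_of_mul_transpose_eq {R : Type*} [CommRing R] [IsDomain R]
    {A : Matrix ι ι R} {c : R} (hc : c ≠ 0) (h : A * Aᵀ = c • 1) : Aᵀ * A = c • 1 := by
  let f := algebraMap R (FractionRing R)
  have hf : Function.Injective f := IsFractionRing.injective R (FractionRing R)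
  have hmap (M : Matrix ι ι R) : M.map f = f c • 1 ↔ M = c • 1 := by
    rw [← (map_injective hf).eq_iff]
    simp [map_smul', Matrix.map_one]
  rw [← hmap, Matrix.map_mul, transpose_map] at h ⊢
  set B := A.map f
  have hc' : f c ≠ 0 := (map_ne_zero_iff f hf).mpr hc
  have hinv : B * ((f c)⁻¹ • Bᵀ) = 1 := by
    rw [Matrix.mul_smul, h, smul_smul, inv_mul_cancel₀ hc', one_smul]
  rw [← smul_inv_smul₀ hc' (Bᵀ * B), ← Matrix.smul_mul, mul_eq_one_comm.mp hinv]

end Matrix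

theorem stmt_14_general (n : ℕ) (hn : 2 ≤ n)
    (W : Matrix (Fin n) (Fin n) ℤ)
    (hdiag : ∀ i, W i i = 0)
    (hoff : ∀ i j, i ≠ j → W i j = 1 ∨ W i j = -1)
    (horth : W * W.transpose = ((n : ℤ) - 1) • 1)
    (k : ℕ) (hkodd : Odd k) :
    ((∑ i, ∑ j, W i j : ℤ) : ℚ) ≤
        (n : ℚ) * ((k : ℚ) ^ 2 + 2 * k + n - 1) / (2 * ((k : ℚ) + 1)) ∧
      (((∑ i, ∑ j, W i j : ℤ) : ℚ) =
          (n : ℚ) * ((k : ℚ) ^ 2 + 2 * k + n - 1) / (2 * ((k : ℚ) + 1)) ↔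
        ∀ i, ∑ j, W i j = (k : ℤ) ∨ ∑ j, W i j = (k : ℤ) + 2) := by
  have hsq : ∑ i, (∑ j, W i j) ^ 2 = n * ((n : ℤ) - 1) := by
    simpa using Matrix.sum_sq_sum_apply_eq_of_transpose_mul_eq_smul_one
      (Matrix.transpose_mul_eq_smul_one_of_mul_transpose_eq (by omega) horth)
  have hQ (i : Fin n) : 0 ≤ (∑ j, W i j - k) * (∑ j, W i j - (k + 2)) :=
    Int.sub_mul_sub_add_two_nonneg hkodd.natCast
      (Matrix.odd_sum_apply_of_mul_transpose_eq_smul_one hdiag hoff (by simp; omega) horth i)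
  set Q := ∑ i, (∑ j, W i j - k) * (∑ j, W i j - (k + 2)) with hQdef
  have hQ_eq : Q = 0 ↔ ∀ i, ∑ j, W i j = (k : ℤ) ∨ ∑ j, W i j = (k : ℤ) + 2 := by
    simp only [hQdef, sum_eq_zero_iff_of_nonneg fun i _ => hQ i, mem_univ, true_implies,
      mul_eq_zero, sub_eq_zero]
  have key : ((∑ i, ∑ j, W i j : ℤ) : ℚ) * (2 * ((k : ℚ) + 1))
      = n * (k ^ 2 + 2 * k + n - 1) - Q := by
    have hZ : (∑ i, ∑ j, W i j) * (2 * ((k : ℤ) + 1)) + Q = n * (k ^ 2 + 2 * k + n - 1) := by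
      rw [hQdef, sum_sub_mul_sub, hsq, card_univ, Fintype.card_fin]
      ring
    rw [eq_sub_iff_add_eq]
    exact_mod_cast hZ
  have hpos : (0 : ℚ) < 2 * ((k : ℚ) + 1) := by positivity
  rw [le_div_iff₀ hpos, eq_div_iff hpos.ne', key, sub_le_self_iff, sub_eq_self,
    Int.cast_nonneg_iff, Int.cast_eq_zero, hQ_eq]
  exact ⟨sum_nonneg fun i _ => hQ i, Iff.rfl⟩

/-- Let `W` be a conference matrix of order `n ≥ 2` with `n − 1`
not a perfect square, and let `k` be an odd positive integer with
`k² ≤ n − 1 < (k+2)²`.  Then `E(W) ≤ n(k² + 2k + n − 1)/(2(k+1))` (as rational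
numbers), with equality iff every row sum of `W` lies in `{k, k+2}`. -/
theorem stmt_14 (n : ℕ) (hn : 2 ≤ n) (hns : ¬ IsSquare (n - 1))
    (W : Matrix (Fin n) (Fin n) ℤ)
    (hdiag : ∀ i, W i i = 0)
    (hoff : ∀ i j, i ≠ j → W i j = 1 ∨ W i j = -1)
    (horth : W * W.transpose = ((n : ℤ) - 1) • 1)
    (k : ℕ) (hkodd : Odd k) (hkpos : 0 < k)
    (hk1 : k ^ 2 ≤ n - 1) (hk2 : n - 1 < (k + 2) ^ 2) :
    ((∑ i, ∑ j, W i j : ℤ) : ℚ) ≤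
        (n : ℚ) * ((k : ℚ) ^ 2 + 2 * k + n - 1) / (2 * ((k : ℚ) + 1)) ∧
      (((∑ i, ∑ j, W i j : ℤ) : ℚ) =
          (n : ℚ) * ((k : ℚ) ^ 2 + 2 * k + n - 1) / (2 * ((k : ℚ) + 1)) ↔
        ∀ i, ∑ j, W i j = (k : ℤ) ∨ ∑ j, W i j = (k : ℤ) + 2) :=
  stmt_14_general n hn W hdiag hoff horth k hkodd
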